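/- If every function computable with zero weighted gates is monotone (d = 0 for negation-free circuits) and each non-monotone basis function ω satisfies d(ω) ≤ r, then any system F computable by a circuit over the basis with t non-monotone gates satisfies d(F) ≤ (2r + 1)(2^t − 1). -/

import Mathlib

open Classical in
/-- Number of jumps (1→0 drops of some member of `F`) between consecutive
elements of a list of Boolean tuples. -/
noncomputable def jumps {k : ℕ} (F : Finset ((Fin k → Bool) → Bool)) :
    List (Fin k → Bool) → ℕ
  | a :: b :: t =>
      (if ∃ f ∈ F, f a = true ∧ f b = false then 1 else 0) + jumps F (b :: t)
  | _ => 0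

/-- Number of value changes of `h` between consecutive elements of a list. -/
def changes {k : ℕ} (h : (Fin k → Bool) → Bool) :
    List (Fin k → Bool) → ℕ
  | a :: b :: t => (if h a ≠ h b then 1 else 0) + changes h (b :: t)
  | _ => 0

/-- An increasing chain of pairwise distinct tuples (coordinatewise order). -/
def IsIncChain {k : ℕ} (l : List (Fin k → Bool)) : Prop :=
  l.Chain' (· ≤ ·) ∧ l.Pairwise (· ≠ ·)

/-- The decrease `d(F)` of a system of Boolean functions: the maximum number of
jumps over all increasing chains. -/
noncomputable def decrease {k : ℕ} (F : Finset ((Fin k → Bool) → Bool)) : ℕ :=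
  sSup {m | ∃ l, IsIncChain l ∧ jumps F l = m}

/-- The decrease `d(f)` of a single Boolean function. -/
noncomputable def decrease1 {k : ℕ} (f : (Fin k → Bool) → Bool) : ℕ :=
  decrease {f}
/-- A Boolean circuit over the basis consisting of all monotone Boolean
functions (weight 0) together with the non-monotone basis functions from `Ω`
(weight 1).  Gate `i` may read the `n` inputs and all previous gate values. -/
structure Circuit (n : ℕ) (Ω : Set (Σ m : ℕ, (Fin m → Bool) → Bool)) where
  size : ℕ
  gate : (i : Fin size) → ((Fin (n + i) → Bool) → Bool)
  nonmono : Finset (Fin size)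
  mono_ok : ∀ i, i ∉ nonmono → Monotone (gate i)
  basis_ok : ∀ i ∈ nonmono, ∃ ω ∈ Ω, ∃ sel : Fin ω.1 → Fin (n + i),
      gate i = fun v => ω.2 (fun j => v (sel j))

/-- The value carried by wire `j` of the circuit (wires `0,…,n-1` are the
inputs, wire `n+i` is the output of gate `i`). -/
def Circuit.wire {n : ℕ} {Ω : Set (Σ m : ℕ, (Fin m → Bool) → Bool)}
    (C : Circuit n Ω) (x : Fin n → Bool) (j : ℕ) : Bool :=
  if h : j < n then x ⟨j, h⟩
  else if h2 : j - n < C.size then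
    C.gate ⟨j - n, h2⟩ (fun t => C.wire x t.val)
  else false
termination_by j
decreasing_by
  have ht := t.isLt
  simp only [not_lt] at h
  simp at ht
  omega

/-- The circuit `C` computes the system `F` if every member of `F` appears on
some wire of `C`. -/
def Circuit.Computes {n : ℕ} {Ω : Set (Σ m : ℕ, (Fin m → Bool) → Bool)}
    (C : Circuit n Ω) (F : Finset ((Fin n → Bool) → Bool)) : Prop :=
  ∀ f ∈ F, ∃ o : ℕ, o < n + C.size ∧ ∀ x, f x = C.wire x o

/-- The inversion complexity `I_B(F)`: the minimal number of non-monotone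
(weight-1) gates in a circuit over the basis computing the system `F`. -/
noncomputable def invCompl (n : ℕ) (Ω : Set (Σ m : ℕ, (Fin m → Bool) → Bool))
    (F : Finset ((Fin n → Bool) → Bool)) : ℕ :=
  sInf {k | ∃ C : Circuit n Ω, C.Computes F ∧ C.nonmono.card = k}

/-- The basis `{¬}`: negation as the unique weight-1 basis function. -/
def negBasis : Set (Σ m : ℕ, (Fin m → Bool) → Bool) :=
  {⟨1, fun v => !(v 0)⟩}

/-!
Cut the circuit at its first non-monotone gate `i₀`, turning that gate into a new input `y`.
The new circuit has one non-monotone gate fewer, and every wire of the old circuit is a wire `g`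
of the new one evaluated at `y = h x`, where `h` is the output of gate `i₀`. Along an increasing
chain, a drop of the old system happens either while `h` is constant, and then it is a drop of
`g` on one of the two chains obtained by fixing `y`, or at a change of `h`. As `h` is a basis
function `ω` applied to monotone wires, it changes at most `2 d(ω) + 1 ≤ 2r + 1` times. Hence
`d(F) ≤ 2 d(G) + 2r + 1`, and the bound follows by induction on the number of non-monotone gates.
-/

section Jumps
variable {k : ℕ} (F : Finset ((Fin k → Bool) → Bool))

lemma jumps_cons_cons (a b : Fin k → Bool) (t : List (Fin k → Bool)) :
    jumps F (a :: b :: t) = jumps F [a, b] + jumps F (b :: t) := by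
  simp [jumps]

lemma jumps_pair_le_one (a b : Fin k → Bool) : jumps F [a, b] ≤ 1 := by
  simp only [jumps]
  split <;> simp

lemma jumps_le_jumps_cons (a : Fin k → Bool) (l : List (Fin k → Bool)) :
    jumps F l ≤ jumps F (a :: l) := by
  cases l with
  | nil => simp [jumps]
  | cons b t => rw [jumps_cons_cons]; omega

lemma jumps_le_length : ∀ l : List (Fin k → Bool), jumps F l ≤ l.length
  | [] | [_] => by simp [jumps]
  | a :: b :: t => by
    have := jumps_pair_le_one F a b
    have := jumps_le_length (b :: t)
    rw [jumps_cons_cons, List.length_cons]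
    omega

lemma jumps_mono {F G} (hFG : F ⊆ G) : ∀ l : List (Fin k → Bool), jumps F l ≤ jumps G l
  | [] | [_] => by simp [jumps]
  | a :: b :: t => by
    have : jumps F [a, b] ≤ jumps G [a, b] := by
      simp only [jumps]
      split_ifs with hF hG <;> try omega
      obtain ⟨f, hf, hfab⟩ := hF
      exact absurd ⟨f, hFG hf, hfab⟩ hG
    rw [jumps_cons_cons F, jumps_cons_cons G]
    have := jumps_mono hFG (b :: t)
    omega

lemma jumps_le_jumps_map {m : ℕ} {G : Finset ((Fin m → Bool) → Bool)}
    (u : (Fin k → Bool) → Fin m → Bool) :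
    ∀ l : List (Fin k → Bool), (∀ f ∈ F, ∃ g ∈ G, ∀ x ∈ l, f x = g (u x)) →
      jumps F l ≤ jumps G (l.map u)
  | [], _ | [_], _ => by simp [jumps]
  | a :: b :: t, hFG => by
    have hab : jumps F [a, b] ≤ jumps G [u a, u b] := by
      simp only [jumps]
      split_ifs with hF hG <;> try omega
      obtain ⟨f, hf, hfa, hfb⟩ := hF
      obtain ⟨g, hg, hfg⟩ := hFG f hf
      exact absurd ⟨g, hg, by simp_all⟩ hG
    have := jumps_le_jumps_map u (b :: t) fun f hf => by
      obtain ⟨g, hg, hfg⟩ := hFG f hf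
      exact ⟨g, hg, fun x hx => hfg x (List.mem_cons_of_mem a hx)⟩
    rw [List.map_cons, List.map_cons, jumps_cons_cons F, jumps_cons_cons G, ← List.map_cons]
    omega

lemma jumps_eq_zero_of_monotone (hF : ∀ f ∈ F, Monotone f) :
    ∀ l : List (Fin k → Bool), l.IsChain (· ≤ ·) → jumps F l = 0
  | [], _ | [_], _ => by simp [jumps]
  | a :: b :: t, hl => by
    rw [List.isChain_cons_cons] at hl
    rw [jumps_cons_cons, jumps_eq_zero_of_monotone hF (b :: t) hl.2]
    simp only [jumps]
    rw [if_neg]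
    rintro ⟨f, hf, hfa, hfb⟩
    have := hF f hf hl.1
    rw [hfa, hfb] at this
    exact absurd this (by decide)

/-- Every change of `h` that is not a drop is a rise, and rises and drops alternate. -/
lemma changes_le_two_mul_jumps_add_one (h : (Fin k → Bool) → Bool) (l : List (Fin k → Bool)) :
    changes h l ≤ 2 * jumps {h} l + 1 := by
  suffices key : ∀ a t, changes h (a :: t) + (if h a then 1 else 0) ≤ 2 * jumps {h} (a :: t) + 1 by
    cases l with
    | nil => simp [changes]
    | cons a t => have := key a t; omega
  intro a t
  induction t generalizing a with
  | nil => simp [changes, jumps]; split <;> simp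
  | cons b t ih =>
    have := ih b
    rw [changes, jumps_cons_cons]
    cases ha : h a <;> cases hb : h b <;> simp_all [jumps] <;> omega

lemma jumps_filter_le_jumps_filter_cons (p : (Fin k → Bool) → Bool) (a : Fin k → Bool)
    (l : List (Fin k → Bool)) : jumps F (l.filter p) ≤ jumps F ((a :: l).filter p) := by
  rw [List.filter_cons]
  split
  · exact jumps_le_jumps_cons F a _
  · exact le_rfl

lemma jumps_le_jumps_filter_add_changes (h : (Fin k → Bool) → Bool) :
    ∀ l : List (Fin k → Bool),
      jumps F l ≤ jumps F (l.filter (fun x => !h x)) + jumps F (l.filter h) + changes h l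
  | [] | [_] => by simp [jumps]
  | a :: b :: t => by
    have ih := jumps_le_jumps_filter_add_changes h (b :: t)
    rw [jumps_cons_cons, changes]
    by_cases hab : h a = h b
    · have hne : ¬h a ≠ h b := not_not.mpr hab
      rw [if_neg hne]
      cases hb : h b <;> rw [hb] at hab <;>
        simp only [List.filter_cons, hab, hb, Bool.not_false, Bool.not_true, Bool.false_eq_true,
          ↓reduceIte] at ih ⊢ <;>
        rw [jumps_cons_cons F a b (List.filter _ t)] <;> omega
    · have := jumps_pair_le_one F a b
      have := jumps_filter_le_jumps_filter_cons F (fun x => !h x) a (b :: t)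
      have := jumps_filter_le_jumps_filter_cons F h a (b :: t)
      rw [if_pos hab]
      omega

end Jumps

section Decrease
variable {k : ℕ} (F : Finset ((Fin k → Bool) → Bool))

lemma bddAbove_jumps : BddAbove {m | ∃ l, IsIncChain l ∧ jumps F l = m} :=
  ⟨Fintype.card (Fin k → Bool), by
    rintro _ ⟨l, hl, rfl⟩
    exact (jumps_le_length F l).trans (List.Nodup.length_le_card hl.2)⟩

/-- Repetitions in a weakly increasing chain carry no drops, so they can be removed. -/
lemma exists_isChain_lt_jumps_eq : ∀ l : List (Fin k → Bool), l.IsChain (· ≤ ·) →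
    ∃ l' : List (Fin k → Bool), l'.IsChain (· < ·) ∧ l'.head? = l.head? ∧ jumps F l' = jumps F l
  | [], _ => ⟨[], List.IsChain.nil, rfl, rfl⟩
  | [a], _ => ⟨[a], List.isChain_singleton a, rfl, rfl⟩
  | a :: b :: t, hl => by
    rw [List.isChain_cons_cons] at hl
    obtain ⟨l', hl', hhead, hjumps⟩ := exists_isChain_lt_jumps_eq (b :: t) hl.2
    obtain ⟨r, rfl⟩ : ∃ r, l' = b :: r := by
      cases l' with
      | nil => simp at hhead
      | cons c r => exact ⟨r, by simpa using hhead⟩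
    rcases hl.1.lt_or_eq with hab | rfl
    · exact ⟨a :: b :: r, List.isChain_cons_cons.mpr ⟨hab, hl'⟩, rfl, by
        rw [jumps_cons_cons, jumps_cons_cons F a b t, hjumps]⟩
    · refine ⟨a :: r, hl', rfl, ?_⟩
      rw [hjumps, jumps_cons_cons F a a t]
      simp [jumps]

lemma jumps_le_decrease {l : List (Fin k → Bool)} (hl : l.IsChain (· ≤ ·)) :
    jumps F l ≤ decrease F := by
  obtain ⟨l', hl', -, hjumps⟩ := exists_isChain_lt_jumps_eq F l hl
  have hlt : l'.Pairwise (· < ·) := List.isChain_iff_pairwise.mp hl'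
  rw [← hjumps]
  exact le_csSup (bddAbove_jumps F)
    ⟨l', ⟨hl'.imp fun _ _ => le_of_lt, hlt.imp ne_of_lt⟩, rfl⟩

lemma decrease_le {m : ℕ} (h : ∀ l : List (Fin k → Bool), l.IsChain (· ≤ ·) → jumps F l ≤ m) :
    decrease F ≤ m :=
  csSup_le' fun _ ⟨l, hl, hjumps⟩ => hjumps ▸ h l hl.1

lemma decrease_mono {F G : Finset ((Fin k → Bool) → Bool)} (hFG : F ⊆ G) :
    decrease F ≤ decrease G :=
  decrease_le F fun l hl => (jumps_mono hFG l).trans (jumps_le_decrease G hl)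

lemma decrease_eq_zero_of_monotone (hF : ∀ f ∈ F, Monotone f) : decrease F = 0 :=
  Nat.eq_zero_of_le_zero <| decrease_le F fun l hl => (jumps_eq_zero_of_monotone F hF l hl).le

theorem decrease_le_two_mul_decrease_add {G : Finset ((Fin (k + 1) → Bool) → Bool)}
    (h : (Fin k → Bool) → Bool) {s : ℕ}
    (hFG : ∀ f ∈ F, ∃ g ∈ G, ∀ x, f x = g (Fin.cons (h x) x))
    (hs : ∀ l : List (Fin k → Bool), l.IsChain (· ≤ ·) → changes h l ≤ s) :
    decrease F ≤ 2 * decrease G + s := by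
  refine decrease_le F fun l hl => ?_
  have hpart : ∀ (c : Bool) (p : (Fin k → Bool) → Bool), (∀ x, p x = true → h x = c) →
      jumps F (l.filter p) ≤ decrease G := by
    intro c p hp
    refine (jumps_le_jumps_map F (fun x => Fin.cons c x) _ fun f hf => ?_).trans
      (jumps_le_decrease G ?_)
    · obtain ⟨g, hg, hfg⟩ := hFG f hf
      refine ⟨g, hg, fun x hx => ?_⟩
      rw [hfg, hp x (List.of_mem_filter hx)]
    · exact List.isChain_map_of_isChain (S := (· ≤ ·)) _
        (fun x y hxy => Fin.cons_le_cons.mpr ⟨le_rfl, hxy⟩) (hl.sublist List.filter_sublist)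
  have := jumps_le_jumps_filter_add_changes F h l
  have := hpart false (fun x => !h x) (by simp)
  have := hpart true h (by simp)
  have := hs l hl
  omega

end Decrease

namespace Circuit
variable {n : ℕ} {Ω : Set (Σ m : ℕ, (Fin m → Bool) → Bool)} (C : Circuit n Ω)

def wires : Finset ((Fin n → Bool) → Bool) :=
  (Finset.range (n + C.size)).image fun j x => C.wire x j

lemma Computes.subset_wires {C : Circuit n Ω} {F : Finset ((Fin n → Bool) → Bool)}
    (hC : C.Computes F) : F ⊆ C.wires := fun f hf => by
  obtain ⟨o, ho, hfo⟩ := hC f hf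
  exact Finset.mem_image.mpr ⟨o, Finset.mem_range.mpr ho, funext fun x => (hfo x).symm⟩

lemma wire_of_lt (x : Fin n → Bool) {j : ℕ} (hj : j < n) : C.wire x j = x ⟨j, hj⟩ := by
  rw [wire, dif_pos hj]

lemma wire_add (x : Fin n → Bool) (i : Fin C.size) :
    C.wire x (n + i) = C.gate i fun t => C.wire x t := by
  rw [wire, dif_neg (by omega), dif_pos (by omega)]
  have gate_congr : ∀ i' : Fin C.size, i' = i →
      (C.gate i' fun t => C.wire x t) = C.gate i fun t => C.wire x t := by
    rintro _ rfl; rfl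
  exact gate_congr _ (Fin.ext (by simp))

lemma wire_of_le (x : Fin n → Bool) {j : ℕ} (hj : n + C.size ≤ j) : C.wire x j = false := by
  rw [wire, dif_neg (by omega), dif_neg (by omega)]

lemma wireIndex_cases {P : ℕ → Prop} (j : ℕ) (input : ∀ j < n, P j)
    (gate : ∀ i : Fin C.size, P (n + i)) (past : ∀ j, n + C.size ≤ j → P j) : P j := by
  rcases lt_or_ge j n with hj | hj
  · exact input j hj
  obtain ⟨i, rfl⟩ := Nat.exists_eq_add_of_le hj
  rcases lt_or_ge i C.size with hi | hi
  · exact gate ⟨i, hi⟩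
  · exact past _ (by omega)

lemma monotone_wire {j : ℕ} (hm : ∀ i : Fin C.size, n + i ≤ j → Monotone (C.gate i)) :
    Monotone fun x => C.wire x j := by
  induction j using Nat.strong_induction_on with
  | _ j ih =>
    induction j using C.wireIndex_cases with
    | input j hj => simpa only [C.wire_of_lt _ hj] using Function.monotone_eval (⟨j, hj⟩ : Fin n)
    | gate i =>
      simp only [C.wire_add]
      refine (hm i le_rfl).comp fun x y hxy t => ?_
      exact ih t (by omega) (fun i' hi' => hm i' (by omega)) hxy
    | past j hj => simpa only [C.wire_of_le _ hj] using monotone_const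

/-- The circuit in which gate `i₀` is replaced by a new input, placed in front of the old ones;
gates other than `i₀` read the old wires shifted by one. -/
def cut (i₀ : Fin C.size) : Circuit (n + 1) Ω where
  size := C.size
  gate i v := if i = i₀ then v ⟨0, by omega⟩ else C.gate i fun j => v ⟨j + 1, by omega⟩
  nonmono := C.nonmono.erase i₀
  mono_ok i hi := by
    by_cases h : i = i₀
    · simpa only [h, if_true] using Function.monotone_eval _
    · simp only [h, if_false]
      exact (C.mono_ok i fun hmem => hi (Finset.mem_erase.mpr ⟨h, hmem⟩)).comp
        fun v w hvw j => hvw _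
  basis_ok i hi := by
    obtain ⟨hne, hmem⟩ := Finset.mem_erase.mp hi
    obtain ⟨ω, hω, sel, hsel⟩ := C.basis_ok i hmem
    exact ⟨ω, hω, fun j => ⟨sel j + 1, by omega⟩, by simp [hne, hsel]⟩

lemma card_nonmono_cut {i₀ : Fin C.size} (hi₀ : i₀ ∈ C.nonmono) :
    (C.cut i₀).nonmono.card = C.nonmono.card - 1 :=
  Finset.card_erase_of_mem hi₀

lemma cut_wire_succ (i₀ : Fin C.size) (x : Fin n → Bool) (j : ℕ) :
    (C.cut i₀).wire (Fin.cons (C.wire x (n + i₀)) x) (j + 1) = C.wire x j := by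
  induction j using Nat.strong_induction_on with
  | _ j ih =>
    induction j using C.wireIndex_cases with
    | input j hj =>
      rw [wire_of_lt _ _ (by omega), C.wire_of_lt _ hj]
      rfl
    | gate i =>
      rw [show n + i + 1 = n + 1 + i by omega, (C.cut i₀).wire_add _ i, C.wire_add x i]
      by_cases h : i = i₀
      · subst h
        simp only [cut, if_true]
        rw [wire_of_lt _ _ (by omega), ← C.wire_add]
        rfl
      · simp only [cut, if_neg h]
        congr 1
        funext t
        exact ih t (by omega)
    | past j hj =>
      rw [wire_of_le _ _ (by simp [cut]; omega), C.wire_of_le _ hj]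

lemma exists_mem_cut_wires (i₀ : Fin C.size) :
    ∀ f ∈ C.wires, ∃ g ∈ (C.cut i₀).wires, ∀ x, f x = g (Fin.cons (C.wire x (n + i₀)) x) := by
  simp only [wires, Finset.mem_image, Finset.mem_range]
  rintro _ ⟨j, hj, rfl⟩
  exact ⟨_, ⟨j + 1, by simp [cut]; omega, rfl⟩, fun x => (C.cut_wire_succ i₀ x j).symm⟩

lemma changes_wire_le {r : ℕ} (hΩ : ∀ ω ∈ Ω, decrease1 ω.2 ≤ r) {i₀ : Fin C.size}
    (hi₀ : i₀ ∈ C.nonmono) (hmin : ∀ i ∈ C.nonmono, i₀ ≤ i) {l : List (Fin n → Bool)}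
    (hl : l.IsChain (· ≤ ·)) : changes (fun x => C.wire x (n + i₀)) l ≤ 2 * r + 1 := by
  obtain ⟨ω, hω, sel, hsel⟩ := C.basis_ok i₀ hi₀
  set u : (Fin n → Bool) → Fin ω.1 → Bool := fun x j => C.wire x (sel j)
  have hu : Monotone u := fun x y hxy j =>
    C.monotone_wire (fun i hi => C.mono_ok i fun hmem => by
      have := Fin.le_def.mp (hmin i hmem)
      have := (sel j).isLt
      omega) hxy
  have hjumps : jumps {fun x => C.wire x (n + i₀)} l ≤ decrease1 ω.2 :=
    (jumps_le_jumps_map _ u l fun f hf => ⟨ω.2, Finset.mem_singleton_self _, fun x _ => by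
        rw [Finset.mem_singleton.mp hf]
        exact (C.wire_add x i₀).trans (congrFun hsel _)⟩).trans
      (jumps_le_decrease _ (List.isChain_map_of_isChain (S := (· ≤ ·)) u (fun _ _ h => hu h) hl))
  have := changes_le_two_mul_jumps_add_one (fun x => C.wire x (n + i₀)) l
  have := hΩ ω hω
  omega

lemma decrease_wires_eq_zero (h : C.nonmono = ∅) : decrease C.wires = 0 := by
  refine decrease_eq_zero_of_monotone _ fun f hf => ?_
  obtain ⟨j, -, rfl⟩ := Finset.mem_image.mp hf
  exact C.monotone_wire fun i _ => C.mono_ok i (by simp [h])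

theorem decrease_wires_le {r : ℕ} (hΩ : ∀ ω ∈ Ω, decrease1 ω.2 ≤ r) :
    decrease C.wires ≤ (2 * r + 1) * (2 ^ C.nonmono.card - 1) := by
  induction hC : C.nonmono.card generalizing n C with
  | zero => simp [C.decrease_wires_eq_zero (Finset.card_eq_zero.mp hC)]
  | succ t ih =>
    have hne : C.nonmono.Nonempty := Finset.card_pos.mp (by omega)
    let i₀ := C.nonmono.min' hne
    have hi₀ : i₀ ∈ C.nonmono := C.nonmono.min'_mem hne
    have hcut := ih (C.cut i₀) (by rw [C.card_nonmono_cut hi₀, hC]; rfl)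
    have hstep := decrease_le_two_mul_decrease_add C.wires _ (C.exists_mem_cut_wires i₀)
      fun l hl => C.changes_wire_le hΩ hi₀ C.nonmono.min'_le hl
    have hpow : 2 ^ (t + 1) - 1 = 2 * (2 ^ t - 1) + 1 := by
      have := Nat.one_le_two_pow (n := t)
      rw [pow_succ]
      omega
    calc decrease C.wires ≤ 2 * ((2 * r + 1) * (2 ^ t - 1)) + (2 * r + 1) := by omega
      _ = (2 * r + 1) * (2 ^ (t + 1) - 1) := by rw [hpow]; ring

end Circuit

/-- Lemma 1: if each non-monotone basis function `ω` satisfies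
`d(ω) ≤ r`, then any system `F` computed by a circuit with `t` non-monotone
gates satisfies `d(F) ≤ (2r+1)(2^t − 1)`. -/
theorem stmt12 (n r t : ℕ) (Ω : Set (Σ m : ℕ, (Fin m → Bool) → Bool))
    (hΩ : ∀ ω ∈ Ω, ¬ Monotone ω.2 ∧ decrease1 ω.2 ≤ r)
    (F : Finset ((Fin n → Bool) → Bool)) (C : Circuit n Ω)
    (hC : C.Computes F) (ht : C.nonmono.card = t) :
    decrease F ≤ (2 * r + 1) * (2 ^ t - 1) :=
  ht ▸ (decrease_mono hC.subset_wires).trans (C.decrease_wires_le fun ω hω => (hΩ ω hω).2)
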